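/- arXiv:2108.00693 — 5 statements merged into one kernel-verified Lean document; each statement's English description precedes it below -/
import Mathlib

section
/- Let x : [t0, t*) → ℝ be a Schwarzschild profile solution (for any integer n ≥ 3). Then the function Ψ(t) = t·x'(t) − x(t) satisfies Ψ(t0) = 0, Ψ'(t) > 0 for all t ∈ (t0, t*), and Ψ(t) ≥ 0 for all t ∈ [t0, t*); consequently x'(t) ≥ x(t)/t > 0 for all t ∈ [t0, t*), so x is strictly increasing on [t0, t*). -/
/-- The coefficient function χ(x,t) = 2m(n−1)/(2(x²+t²)^n + m(x²+t²)). -/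
noncomputable def schChi (n : ℕ) (m x t : ℝ) : ℝ :=
  2 * m * ((n : ℝ) - 1) / (2 * (x ^ 2 + t ^ 2) ^ n + m * (x ^ 2 + t ^ 2))

/-- A Schwarzschild profile solution on the interval [t0, t*), with t* ∈ ℝ ∪ {+∞}
encoded as an `EReal`.  The functions `x'` and `x''` are the first and second
derivatives of the twice continuously differentiable positive function `x`,
which solves the profile ODE with the free-boundary initial conditions. -/
structure IsSchwarzschildProfile (n : ℕ) (m R0 t0 : ℝ) (tstar : EReal)
    (x x' x'' : ℝ → ℝ) : Prop where
  hasDeriv : ∀ t : ℝ, t0 ≤ t → (t : EReal) < tstar → HasDerivAt x (x' t) t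
  hasDeriv2 : ∀ t : ℝ, t0 ≤ t → (t : EReal) < tstar → HasDerivAt x' (x'' t) t
  cont2 : ContinuousOn x'' {t : ℝ | t0 ≤ t ∧ (t : EReal) < tstar}
  pos : ∀ t : ℝ, t0 ≤ t → (t : EReal) < tstar → 0 < x t
  ode : ∀ t : ℝ, t0 ≤ t → (t : EReal) < tstar →
    x'' t = ((t * x' t - x t) * schChi n m (x t) t + ((n : ℝ) - 2) / x t)
      * (1 + (x' t) ^ 2)
  init : x t0 = Real.sqrt (R0 ^ 2 - t0 ^ 2)
  initDeriv : t0 * x' t0 = x t0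

/-! The function `Ψ = t x' - x` has `Ψ' = t x''`, and by the ODE `x'' > 0` wherever `Ψ ≥ 0`,
since `χ > 0` and `n > 2`. So `Ψ`, which vanishes at `t0` by the free-boundary condition, can only
cross zero upwards and stays nonnegative; hence `x' ≥ x / t > 0`. -/

open Set

theorem nonneg_of_hasDerivAt_of_deriv_pos_of_eq_zero {f f' : ℝ → ℝ} {a b : ℝ}
    (hf : ∀ s ∈ Icc a b, HasDerivAt f (f' s) s) (ha : 0 ≤ f a)
    (hzero : ∀ s ∈ Ico a b, f s = 0 → 0 < f' s) : ∀ s ∈ Icc a b, 0 ≤ f s := by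
  intro s hs
  have hneg : -f s ≤ 0 :=
    image_le_of_deriv_right_lt_deriv_boundary (f := fun s => -f s) (B := fun _ => 0)
      (fun s hs => (hf s hs).continuousAt.neg.continuousWithinAt)
      (fun s hs => (hf s (Ico_subset_Icc_self hs)).neg.hasDerivWithinAt)
      (neg_nonpos.mpr ha) (fun _ => hasDerivAt_const _ _)
      (fun s hs hfs => neg_neg_of_pos (hzero s hs (neg_eq_zero.mp hfs))) hs
  linarith

theorem schChi_pos {n : ℕ} {m x t : ℝ} (hn : 1 < n) (hm : 0 < m) (hx : x ≠ 0) :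
    0 < schChi n m x t := by
  have hsum : 0 < x ^ 2 + t ^ 2 := by positivity
  have hn' : (1 : ℝ) < n := by exact_mod_cast hn
  unfold schChi
  exact div_pos (by nlinarith) (by positivity)

theorem ordConnected_setOf_le_and_coe_lt (t0 : ℝ) (tstar : EReal) :
    OrdConnected {t : ℝ | t0 ≤ t ∧ (t : EReal) < tstar} :=
  ⟨fun _ ha _ hb _ hs =>
    ⟨ha.1.trans hs.1, (EReal.coe_le_coe_iff.mpr hs.2).trans_lt hb.2⟩⟩

namespace IsSchwarzschildProfile

variable {n : ℕ} {m R0 t0 : ℝ} {tstar : EReal} {x x' x'' : ℝ → ℝ}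

theorem hasDerivAt_mul_deriv_sub (hx : IsSchwarzschildProfile n m R0 t0 tstar x x' x'')
    {t : ℝ} (ht : t0 ≤ t) (hts : (t : EReal) < tstar) :
    HasDerivAt (fun s => s * x' s - x s) (t * x'' t) t := by
  refine (((hasDerivAt_id' t).mul (hx.hasDeriv2 t ht hts)).sub
    (hx.hasDeriv t ht hts)).congr_deriv ?_
  ring

theorem secondDeriv_pos (hx : IsSchwarzschildProfile n m R0 t0 tstar x x' x'')
    (hn : 3 ≤ n) (hm : 0 < m) {t : ℝ} (ht : t0 ≤ t) (hts : (t : EReal) < tstar)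
    (hψ : 0 ≤ t * x' t - x t) : 0 < x'' t := by
  have hxt := hx.pos t ht hts
  have hn' : (0 : ℝ) < n - 2 := by
    have : (3 : ℝ) ≤ n := by exact_mod_cast hn
    linarith
  have hchi := schChi_pos (n := n) (t := t) (by omega) hm hxt.ne'
  rw [hx.ode t ht hts]
  exact mul_pos (add_pos_of_nonneg_of_pos (mul_nonneg hψ hchi.le) (div_pos hn' hxt))
    (by positivity)

theorem mul_deriv_sub_nonneg (hx : IsSchwarzschildProfile n m R0 t0 tstar x x' x'')
    (hn : 3 ≤ n) (hm : 0 < m) (ht0 : 0 < t0) {t : ℝ} (ht : t0 ≤ t)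
    (hts : (t : EReal) < tstar) : 0 ≤ t * x' t - x t := by
  have hsub : Icc t0 t ⊆ {s : ℝ | t0 ≤ s ∧ (s : EReal) < tstar} :=
    (ordConnected_setOf_le_and_coe_lt t0 tstar).out
      ⟨le_rfl, (EReal.coe_le_coe_iff.mpr ht).trans_lt hts⟩ ⟨ht, hts⟩
  refine nonneg_of_hasDerivAt_of_deriv_pos_of_eq_zero
    (fun s hs => hx.hasDerivAt_mul_deriv_sub (hsub hs).1 (hsub hs).2)
    (sub_eq_zero.mpr hx.initDeriv).ge ?_ t ⟨ht, le_rfl⟩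
  intro s hs hψ
  have hs' := hsub (Ico_subset_Icc_self hs)
  exact mul_pos (ht0.trans_le hs.1) (hx.secondDeriv_pos hn hm hs'.1 hs'.2 hψ.ge)

theorem div_le_deriv (hx : IsSchwarzschildProfile n m R0 t0 tstar x x' x'')
    (hn : 3 ≤ n) (hm : 0 < m) (ht0 : 0 < t0) {t : ℝ} (ht : t0 ≤ t)
    (hts : (t : EReal) < tstar) : x t / t ≤ x' t ∧ 0 < x t / t := by
  have htpos := ht0.trans_le ht
  refine ⟨?_, div_pos (hx.pos t ht hts) htpos⟩
  rw [div_le_iff₀ htpos]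
  linarith [hx.mul_deriv_sub_nonneg hn hm ht0 ht hts]

theorem strictMonoOn (hx : IsSchwarzschildProfile n m R0 t0 tstar x x' x'')
    (hn : 3 ≤ n) (hm : 0 < m) (ht0 : 0 < t0) :
    StrictMonoOn x {t : ℝ | t0 ≤ t ∧ (t : EReal) < tstar} := by
  refine strictMonoOn_of_deriv_pos (ordConnected_setOf_le_and_coe_lt t0 tstar).convex
    (fun s hs => (hx.hasDeriv s hs.1 hs.2).continuousAt.continuousWithinAt) fun s hs => ?_
  obtain ⟨hs, hss⟩ := interior_subset hs
  rw [(hx.hasDeriv s hs hss).deriv]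
  exact (hx.div_le_deriv hn hm ht0 hs hss).2.trans_le (hx.div_le_deriv hn hm ht0 hs hss).1

end IsSchwarzschildProfile

theorem statement0_general (n : ℕ) (hn : 3 ≤ n) (m R0 t0 : ℝ) (hm : 0 < m)
    (ht0 : 0 < t0) (tstar : EReal)
    (x x' x'' : ℝ → ℝ) (hx : IsSchwarzschildProfile n m R0 t0 tstar x x' x'') :
    (t0 * x' t0 - x t0 = 0) ∧
    (∀ t : ℝ, t0 < t → (t : EReal) < tstar →
      HasDerivAt (fun s => s * x' s - x s) (t * x'' t) t ∧ 0 < t * x'' t) ∧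
    (∀ t : ℝ, t0 ≤ t → (t : EReal) < tstar → 0 ≤ t * x' t - x t) ∧
    (∀ t : ℝ, t0 ≤ t → (t : EReal) < tstar → x t / t ≤ x' t ∧ 0 < x t / t) ∧
    StrictMonoOn x {t : ℝ | t0 ≤ t ∧ (t : EReal) < tstar} :=
  ⟨sub_eq_zero.mpr hx.initDeriv,
    fun _ ht hts => ⟨hx.hasDerivAt_mul_deriv_sub ht.le hts,
      mul_pos (ht0.trans ht) (hx.secondDeriv_pos hn hm ht.le hts
        (hx.mul_deriv_sub_nonneg hn hm ht0 ht.le hts))⟩,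
    fun _ ht hts => hx.mul_deriv_sub_nonneg hn hm ht0 ht hts,
    fun _ ht hts => hx.div_le_deriv hn hm ht0 ht hts,
    hx.strictMonoOn hn hm ht0⟩

/-- for a Schwarzschild profile solution, Ψ(t) = t·x'(t) − x(t)
satisfies Ψ(t0) = 0, Ψ'(t) = t·x''(t) > 0 on (t0,t*) and Ψ ≥ 0 on [t0,t*);
consequently x'(t) ≥ x(t)/t > 0, so x is strictly increasing on [t0,t*). -/
theorem statement0 (n : ℕ) (hn : 3 ≤ n) (m R0 t0 : ℝ) (hm : 0 < m)
    (ht0 : 0 < t0) (htR : t0 < R0) (tstar : EReal) (hts : (t0 : EReal) < tstar)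
    (x x' x'' : ℝ → ℝ) (hx : IsSchwarzschildProfile n m R0 t0 tstar x x' x'') :
    (t0 * x' t0 - x t0 = 0) ∧
    (∀ t : ℝ, t0 < t → (t : EReal) < tstar →
      HasDerivAt (fun s => s * x' s - x s) (t * x'' t) t ∧ 0 < t * x'' t) ∧
    (∀ t : ℝ, t0 ≤ t → (t : EReal) < tstar → 0 ≤ t * x' t - x t) ∧
    (∀ t : ℝ, t0 ≤ t → (t : EReal) < tstar → x t / t ≤ x' t ∧ 0 < x t / t) ∧
    StrictMonoOn x {t : ℝ | t0 ≤ t ∧ (t : EReal) < tstar} :=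
  statement0_general n hn m R0 t0 hm ht0 tstar x x' x'' hx
end

section
/- Let n = 3 and let x : [t0, t*) → ℝ be a Schwarzschild profile solution. Then for all t ∈ [t0, t*) one has x''(t) ≤ [x'(t)·a/x(t)⁴ + 1/x(t)]·(1 + x'(t)²), where a = max{2m/3, 2m/(3·t0²)}. -/
open Set

section Chi

variable {n : ℕ} {m x t : ℝ}

lemma schChi_nonneg (hm : 0 ≤ m) (hn : 1 ≤ n) : 0 ≤ schChi n m x t := by
  have hn' : (1 : ℝ) ≤ n := by exact_mod_cast hn
  exact div_nonneg (mul_nonneg (by positivity) (sub_nonneg.2 hn')) (by positivity)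

lemma schChi_le (hm : 0 ≤ m) (hn : 1 ≤ n) (hρ : 0 < x ^ 2 + t ^ 2) :
    schChi n m x t ≤ m * ((n : ℝ) - 1) / (x ^ 2 + t ^ 2) ^ n := by
  have hn' : (1 : ℝ) ≤ n := by exact_mod_cast hn
  calc schChi n m x t ≤ 2 * m * ((n : ℝ) - 1) / (2 * (x ^ 2 + t ^ 2) ^ n) := by
        unfold schChi
        gcongr _ / ?_
        exact le_add_of_nonneg_right (mul_nonneg hm hρ.le)
    _ = m * ((n : ℝ) - 1) / (x ^ 2 + t ^ 2) ^ n := by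
        rw [mul_assoc, mul_div_mul_left _ _ two_ne_zero]

end Chi

lemma three_mul_sq_mul_pow_four_le (x t : ℝ) : 3 * t ^ 2 * x ^ 4 ≤ (x ^ 2 + t ^ 2) ^ 3 := by
  nlinarith [pow_nonneg (sq_nonneg x) 3, pow_nonneg (sq_nonneg t) 3,
    mul_nonneg (sq_nonneg x) (pow_nonneg (sq_nonneg t) 2)]

lemma mul_schChi_three_le {m x t : ℝ} (hm : 0 ≤ m) (hx : 0 < x) (ht : 0 < t) :
    t * schChi 3 m x t ≤ 2 * m / (3 * t * x ^ 4) := by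
  have hρ : 0 < x ^ 2 + t ^ 2 := by positivity
  calc t * schChi 3 m x t ≤ t * (m * ((3 : ℕ) - 1 : ℝ) / (x ^ 2 + t ^ 2) ^ 3) := by
        gcongr
        exact schChi_le hm (by norm_num) hρ
    _ = t * (2 * m / (x ^ 2 + t ^ 2) ^ 3) := by push_cast; ring
    _ ≤ t * (2 * m / (3 * t ^ 2 * x ^ 4)) := by
        gcongr
        exact three_mul_sq_mul_pow_four_le x t
    _ = 2 * m / (3 * t * x ^ 4) := by field_simp

lemma div_le_max_self_div_sq {c s : ℝ} (hc : 0 ≤ c) (hs : 0 < s) : c / s ≤ max c (c / s ^ 2) := by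
  rcases le_total 1 s with h | h
  · exact le_max_of_le_left (div_le_self hc h)
  · refine le_max_of_le_right (div_le_div_of_nonneg_left hc (pow_pos hs 2) ?_)
    nlinarith

namespace IsSchwarzschildProfile

variable {n : ℕ} {m R0 t0 : ℝ} {tstar : EReal} {x x' x'' : ℝ → ℝ}

lemma le_mul_deriv (hx : IsSchwarzschildProfile n m R0 t0 tstar x x' x'') (hn : 3 ≤ n)
    (ht0 : 0 < t0) {t : ℝ} (ht : t0 ≤ t) (hts : (t : EReal) < tstar) : x t ≤ t * x' t := by
  have hI : ∀ s ∈ Icc t0 t, t0 ≤ s ∧ (s : EReal) < tstar := fun s hs =>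
    ⟨hs.1, lt_of_le_of_lt (EReal.coe_le_coe_iff.2 hs.2) hts⟩
  have hB : ∀ s ∈ Icc t0 t, HasDerivAt (fun s => s * x' s) (x' s + s * x'' s) s := fun s hs => by
    simpa using (hasDerivAt_id' s).fun_mul (hx.hasDeriv2 s (hI s hs).1 (hI s hs).2)
  have hx1 : ∀ s ∈ Icc t0 t, HasDerivAt x (x' s) s := fun s hs =>
    hx.hasDeriv s (hI s hs).1 (hI s hs).2
  refine image_le_of_deriv_right_lt_deriv_boundary'
    (fun s hs => (hx1 s hs).continuousAt.continuousWithinAt)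
    (fun s hs => (hx1 s (Ico_subset_Icc_self hs)).hasDerivWithinAt)
    (B := fun s => s * x' s) hx.initDeriv.ge
    (fun s hs => (hB s hs).continuousAt.continuousWithinAt)
    (fun s hs => (hB s (Ico_subset_Icc_self hs)).hasDerivWithinAt) ?_ ⟨ht, le_rfl⟩
  intro s hs hxs_eq
  obtain ⟨hs0, hss⟩ := hI s (Ico_subset_Icc_self hs)
  have hxs := hx.pos s hs0 hss
  have hn' : (0 : ℝ) < n - 2 := by
    have : (3 : ℝ) ≤ n := by exact_mod_cast hn
    linarith
  have hx'' : 0 < x'' s := by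
    rw [hx.ode s hs0 hss, show s * x' s - x s = 0 by rw [hxs_eq]; ring, zero_mul, zero_add]
    positivity
  have : 0 < s * x'' s := mul_pos (ht0.trans_le hs0) hx''
  linarith

end IsSchwarzschildProfile

theorem statement4_general (m R0 t0 : ℝ) (hm : 0 < m) (ht0 : 0 < t0)
    (tstar : EReal)
    (x x' x'' : ℝ → ℝ) (hx : IsSchwarzschildProfile 3 m R0 t0 tstar x x' x'') :
    ∀ t : ℝ, t0 ≤ t → (t : EReal) < tstar →
      x'' t ≤ (x' t * (max (2 * m / 3) (2 * m / (3 * t0 ^ 2))) / (x t) ^ 4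
        + 1 / x t) * (1 + (x' t) ^ 2) := by
  intro t ht hts
  set a := max (2 * m / 3) (2 * m / (3 * t0 ^ 2))
  have htpos : 0 < t := ht0.trans_le ht
  have hxt := hx.pos t ht hts
  have hxle := hx.le_mul_deriv le_rfl ht0 ht hts
  have hx' : 0 ≤ x' t := by nlinarith
  have hχ : 0 ≤ schChi 3 m (x t) t := schChi_nonneg hm.le (by norm_num)
  have htχ : t * schChi 3 m (x t) t ≤ a / x t ^ 4 :=
    calc t * schChi 3 m (x t) t ≤ 2 * m / (3 * t * x t ^ 4) := mul_schChi_three_le hm.le hxt htpos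
      _ ≤ 2 * m / (3 * t0 * x t ^ 4) := by gcongr
      _ = 2 * m / 3 / t0 / x t ^ 4 := by ring
      _ ≤ a / x t ^ 4 := by
        gcongr
        simpa only [div_div] using div_le_max_self_div_sq (c := 2 * m / 3) (by positivity) ht0
  rw [hx.ode t ht hts]
  gcongr ?_ * _
  calc (t * x' t - x t) * schChi 3 m (x t) t + ((3 : ℕ) - 2 : ℝ) / x t
      ≤ x' t * (t * schChi 3 m (x t) t) + 1 / x t := by
        rw [show ((3 : ℕ) - 2 : ℝ) = 1 by norm_num]
        nlinarith [mul_nonneg hxt.le hχ]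
    _ ≤ x' t * (a / x t ^ 4) + 1 / x t := by gcongr
    _ = x' t * a / x t ^ 4 + 1 / x t := by ring

/-- for n = 3, a Schwarzschild profile solution satisfies the
autonomous bound x'' ≤ [x'·a/x⁴ + 1/x]·(1 + x'²) with
a = max{2m/3, 2m/(3t0²)}. -/
theorem statement4 (m R0 t0 : ℝ) (hm : 0 < m) (ht0 : 0 < t0) (htR : t0 < R0)
    (tstar : EReal) (hts : (t0 : EReal) < tstar)
    (x x' x'' : ℝ → ℝ) (hx : IsSchwarzschildProfile 3 m R0 t0 tstar x x' x'') :
    ∀ t : ℝ, t0 ≤ t → (t : EReal) < tstar →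
      x'' t ≤ (x' t * (max (2 * m / 3) (2 * m / (3 * t0 ^ 2))) / (x t) ^ 4
        + 1 / x t) * (1 + (x' t) ^ 2) :=
  statement4_general m R0 t0 hm ht0 tstar x x' x'' hx
end

section
/- Let n ≥ 3 be an integer and 0 < t0 < R0 real numbers. Let u : [t0, t*) → ℝ be twice continuously differentiable with u(t) > 0, satisfying u''(t) = (n−2)·(1 + u'(t)²)/u(t) on [t0, t*) with u(t0) = √(R0² − t0²) and t0·u'(t0) = u(t0). Then u'(t) > 0 for all t ∈ [t0, t*), and for every t ∈ [t0, t*) one has t = t0 + ∫_{√(R0²−t0²)}^{u(t)} dμ/√((R0/t0)²·(μ/√(R0²−t0²))^{2(n−2)} − 1). -/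
/-!
Multiplying the ODE `u'' = m (1 + u'²) / u` by `2u' / (1 + u'²)` shows that `(1 + u'²) / u^(2m)`
is a first integral. The initial data fix its value, giving
`u'² = (R0/t0)² (u / u(t0))^(2m) - 1`. As `u'' ≥ 0` and `u'(t0) = u(t0)/t0 > 0`, the slope `u'`
stays positive, hence is the positive square root of the right-hand side, and the implicit
formula is the substitution `μ = u(s)` in `t - t0 = ∫_{t0}^{t} u'(s) / u'(s) ds`.
-/

open Set

theorem intervalIntegral.integral_comp_eq_sub_of_mul_deriv_eq_one {a b : ℝ} {f f' g : ℝ → ℝ}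
    (hf : ∀ x ∈ uIcc a b, HasDerivAt f (f' x) x) (hf' : ContinuousOn f' (uIcc a b))
    (hg : ContinuousOn g (f '' uIcc a b)) (hfg : ∀ x ∈ uIcc a b, g (f x) * f' x = 1) :
    ∫ y in f a..f b, g y = b - a := by
  rw [← intervalIntegral.integral_comp_mul_deriv' hf hf' hg,
    intervalIntegral.integral_congr (f := fun x => (g ∘ f) x * f' x) (g := fun _ => 1) hfg]
  simp

namespace MinimalProfile

variable {m : ℕ} {a b R0 t0 : ℝ} {u u' : ℝ → ℝ}

theorem hasDerivAt_firstIntegral {x : ℝ} (hu : HasDerivAt u (u' x) x)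
    (hu' : HasDerivAt u' (m * (1 + u' x ^ 2) / u x) x) (hx : u x ≠ 0) :
    HasDerivAt (fun s => (1 + u' s ^ 2) / u s ^ (2 * m)) 0 x := by
  refine (((hu'.fun_pow 2).const_add 1).fun_div (hu.fun_pow (2 * m))
    (pow_ne_zero _ hx)).congr_deriv ?_
  rcases m with _ | m
  · simp
  · rw [show 2 * (m + 1) - 1 = 2 * m + 1 by omega]
    field_simp
    push_cast
    ring

theorem firstIntegral_eq (hu : ∀ x ∈ Icc a b, HasDerivAt u (u' x) x)
    (hu' : ∀ x ∈ Icc a b, HasDerivAt u' (m * (1 + u' x ^ 2) / u x) x)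
    (hpos : ∀ x ∈ Icc a b, 0 < u x) :
    ∀ x ∈ Icc a b, (1 + u' x ^ 2) / u x ^ (2 * m) = (1 + u' a ^ 2) / u a ^ (2 * m) := by
  have hderiv : ∀ x ∈ Icc a b, HasDerivAt (fun s => (1 + u' s ^ 2) / u s ^ (2 * m)) 0 x :=
    fun x hx => hasDerivAt_firstIntegral (hu x hx) (hu' x hx) (hpos x hx).ne'
  exact constant_of_has_deriv_right_zero
    (fun x hx => (hderiv x hx).continuousAt.continuousWithinAt)
    (fun x hx => (hderiv x (Ico_subset_Icc_self hx)).hasDerivWithinAt)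

theorem monotoneOn_slope
    (hu' : ∀ x ∈ Icc a b, HasDerivAt u' (m * (1 + u' x ^ 2) / u x) x)
    (hpos : ∀ x ∈ Icc a b, 0 < u x) : MonotoneOn u' (Icc a b) := by
  refine monotoneOn_of_hasDerivWithinAt_nonneg (convex_Icc a b)
    (fun x hx => (hu' x hx).continuousAt.continuousWithinAt)
    (fun x hx => (hu' x (interior_subset hx)).hasDerivWithinAt) fun x hx => ?_
  have := hpos x (interior_subset hx)
  positivity

theorem slope_sq_eq (ht0 : 0 < t0) (htR : t0 < R0)
    (hu : ∀ x ∈ Icc t0 b, HasDerivAt u (u' x) x)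
    (hu' : ∀ x ∈ Icc t0 b, HasDerivAt u' (m * (1 + u' x ^ 2) / u x) x)
    (hpos : ∀ x ∈ Icc t0 b, 0 < u x)
    (hinit : u t0 = √(R0 ^ 2 - t0 ^ 2)) (hinit' : t0 * u' t0 = u t0) :
    ∀ x ∈ Icc t0 b,
      u' x ^ 2 = (R0 / t0) ^ 2 * (u x / √(R0 ^ 2 - t0 ^ 2)) ^ (2 * m) - 1 := by
  intro x hx
  have hR : u t0 ^ 2 + t0 ^ 2 = R0 ^ 2 := by
    rw [hinit, Real.sq_sqrt] <;> nlinarith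
  have hslope : u' t0 = u t0 / t0 := by field_simp; linarith
  have hinitial : 1 + u' t0 ^ 2 = (R0 / t0) ^ 2 := by
    rw [hslope]; field_simp; linarith
  have hconst := firstIntegral_eq hu hu' hpos x hx
  rw [hinitial, div_eq_iff (pow_ne_zero _ (hpos x hx).ne')] at hconst
  rw [← hinit, div_pow]
  linear_combination hconst

theorem slope_pos_and_eq_add_integral (ht0 : 0 < t0) (htR : t0 < R0) (hb : t0 ≤ b)
    (hu : ∀ x ∈ Icc t0 b, HasDerivAt u (u' x) x)
    (hu' : ∀ x ∈ Icc t0 b, HasDerivAt u' (m * (1 + u' x ^ 2) / u x) x)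
    (hpos : ∀ x ∈ Icc t0 b, 0 < u x)
    (hinit : u t0 = √(R0 ^ 2 - t0 ^ 2)) (hinit' : t0 * u' t0 = u t0) :
    0 < u' b ∧ b = t0 + ∫ μ in √(R0 ^ 2 - t0 ^ 2)..u b,
      1 / √((R0 / t0) ^ 2 * (μ / √(R0 ^ 2 - t0 ^ 2)) ^ (2 * m) - 1) := by
  have hslope_pos : ∀ x ∈ Icc t0 b, 0 < u' x := fun x hx =>
    (pos_of_mul_pos_right (hinit' ▸ hpos t0 (left_mem_Icc.2 hb)) ht0.le).trans_le
      (monotoneOn_slope hu' hpos (left_mem_Icc.2 hb) hx hx.1)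
  have hsqrt : ∀ x ∈ Icc t0 b,
      √((R0 / t0) ^ 2 * (u x / √(R0 ^ 2 - t0 ^ 2)) ^ (2 * m) - 1) = u' x := fun x hx => by
    rw [← slope_sq_eq ht0 htR hu hu' hpos hinit hinit' x hx]
    exact Real.sqrt_sq (hslope_pos x hx).le
  refine ⟨hslope_pos b (right_mem_Icc.2 hb), ?_⟩
  have hint : ∫ μ in u t0..u b,
      1 / √((R0 / t0) ^ 2 * (μ / √(R0 ^ 2 - t0 ^ 2)) ^ (2 * m) - 1) = b - t0 := by
    refine intervalIntegral.integral_comp_eq_sub_of_mul_deriv_eq_one (f' := u') ?_ ?_ ?_ ?_ <;>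
      rw [uIcc_of_le hb]
    · exact hu
    · exact fun x hx => (hu' x hx).continuousAt.continuousWithinAt
    · rintro _ ⟨x, hx, rfl⟩
      refine (continuousAt_const.div (by fun_prop) ?_).continuousWithinAt
      rw [hsqrt x hx]
      exact (hslope_pos x hx).ne'
    · intro x hx
      rw [hsqrt x hx]
      exact one_div_mul_cancel (hslope_pos x hx).ne'
  rw [hinit] at hint
  linarith

end MinimalProfile

theorem statement7_general (n : ℕ) (hn : 3 ≤ n) (R0 t0 : ℝ) (ht0 : 0 < t0)
    (htR : t0 < R0) (tstar : EReal)
    (u u' u'' : ℝ → ℝ)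
    (hu1 : ∀ t : ℝ, t0 ≤ t → (t : EReal) < tstar → HasDerivAt u (u' t) t)
    (hu2 : ∀ t : ℝ, t0 ≤ t → (t : EReal) < tstar → HasDerivAt u' (u'' t) t)
    (hupos : ∀ t : ℝ, t0 ≤ t → (t : EReal) < tstar → 0 < u t)
    (hode : ∀ t : ℝ, t0 ≤ t → (t : EReal) < tstar →
      u'' t = ((n : ℝ) - 2) * (1 + (u' t) ^ 2) / u t)
    (hinit : u t0 = Real.sqrt (R0 ^ 2 - t0 ^ 2))
    (hinit' : t0 * u' t0 = u t0) :
    ∀ t : ℝ, t0 ≤ t → (t : EReal) < tstar →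
      0 < u' t ∧
      t = t0 + ∫ μ in (Real.sqrt (R0 ^ 2 - t0 ^ 2))..(u t),
        1 / Real.sqrt ((R0 / t0) ^ 2
          * (μ / Real.sqrt (R0 ^ 2 - t0 ^ 2)) ^ (2 * (n - 2)) - 1) := by
  intro t ht htlt
  have hI : ∀ x ∈ Icc t0 t, t0 ≤ x ∧ (x : EReal) < tstar :=
    fun x hx => ⟨hx.1, (EReal.coe_le_coe_iff.2 hx.2).trans_lt htlt⟩
  have hcoeff : ((n - 2 : ℕ) : ℝ) = (n : ℝ) - 2 := by
    rw [Nat.cast_sub (by omega)]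
    norm_num
  refine MinimalProfile.slope_pos_and_eq_add_integral ht0 htR ht
    (fun x hx => hu1 x (hI x hx).1 (hI x hx).2) (fun x hx => ?_)
    (fun x hx => hupos x (hI x hx).1 (hI x hx).2) hinit hinit'
  rw [hcoeff, ← hode x (hI x hx).1 (hI x hx).2]
  exact hu2 x (hI x hx).1 (hI x hx).2

/-- the solution of the comparison ODE u'' = (n−2)(1 + u'²)/u with
free-boundary initial conditions u(t0) = √(R0² − t0²), t0·u'(t0) = u(t0) has
u' > 0 and satisfies the implicit formula
t = t0 + ∫_{√(R0²−t0²)}^{u(t)} dμ/√((R0/t0)²(μ/√(R0²−t0²))^{2(n−2)} − 1). -/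
theorem statement7 (n : ℕ) (hn : 3 ≤ n) (R0 t0 : ℝ) (ht0 : 0 < t0)
    (htR : t0 < R0) (tstar : EReal) (hts : (t0 : EReal) < tstar)
    (u u' u'' : ℝ → ℝ)
    (hu1 : ∀ t : ℝ, t0 ≤ t → (t : EReal) < tstar → HasDerivAt u (u' t) t)
    (hu2 : ∀ t : ℝ, t0 ≤ t → (t : EReal) < tstar → HasDerivAt u' (u'' t) t)
    (hu2c : ContinuousOn u'' {t : ℝ | t0 ≤ t ∧ (t : EReal) < tstar})
    (hupos : ∀ t : ℝ, t0 ≤ t → (t : EReal) < tstar → 0 < u t)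
    (hode : ∀ t : ℝ, t0 ≤ t → (t : EReal) < tstar →
      u'' t = ((n : ℝ) - 2) * (1 + (u' t) ^ 2) / u t)
    (hinit : u t0 = Real.sqrt (R0 ^ 2 - t0 ^ 2))
    (hinit' : t0 * u' t0 = u t0) :
    ∀ t : ℝ, t0 ≤ t → (t : EReal) < tstar →
      0 < u' t ∧
      t = t0 + ∫ μ in (Real.sqrt (R0 ^ 2 - t0 ^ 2))..(u t),
        1 / Real.sqrt ((R0 / t0) ^ 2
          * (μ / Real.sqrt (R0 ^ 2 - t0 ^ 2)) ^ (2 * (n - 2)) - 1) :=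
  statement7_general n hn R0 t0 ht0 htR tstar u u' u'' hu1 hu2 hupos hode hinit hinit'
end

section
/- Let n ≥ 4 be an integer and let x : [t0, t*) → ℝ be a general profile solution (for any C¹ function U : (0,∞) → ℝ with U'(s) < 0 for all s > 0). Then t* ≤ h0, where h0 = t0 + ∫_{√(r0²−t0²)}^{+∞} dμ/√((r0/t0)²·(μ/√(r0²−t0²))^{2(n−2)} − 1) < +∞; in particular x blows up in finite time and the corresponding rotationally symmetric free-boundary minimal hypersurface is bounded above by the hyperplane xₙ = h0. -/
/-- A general profile solution on the interval [t0, t*) (t* ∈ ℝ ∪ {+∞} encoded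
as an `EReal`) for the conformal metric e^{2U(|x|²)}⟨,⟩ on ℝⁿ minus the ball of
radius r0: a twice continuously differentiable positive function `x` (with
first and second derivatives `x'`, `x''`) solving the profile ODE
x'' = [−2(n−1)·U'(x²+t²)·(t·x' − x) + (n−2)/x]·(1 + x'²)
with the free-boundary initial conditions. Here `U'` is the derivative of U. -/
structure IsGeneralProfile (n : ℕ) (U' : ℝ → ℝ) (r0 t0 : ℝ) (tstar : EReal)
    (x x' x'' : ℝ → ℝ) : Prop where
  hasDeriv : ∀ t : ℝ, t0 ≤ t → (t : EReal) < tstar → HasDerivAt x (x' t) t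
  hasDeriv2 : ∀ t : ℝ, t0 ≤ t → (t : EReal) < tstar → HasDerivAt x' (x'' t) t
  cont2 : ContinuousOn x'' {t : ℝ | t0 ≤ t ∧ (t : EReal) < tstar}
  pos : ∀ t : ℝ, t0 ≤ t → (t : EReal) < tstar → 0 < x t
  ode : ∀ t : ℝ, t0 ≤ t → (t : EReal) < tstar →
    x'' t = (-2 * ((n : ℝ) - 1) * U' ((x t) ^ 2 + t ^ 2) * (t * x' t - x t)
      + ((n : ℝ) - 2) / x t) * (1 + (x' t) ^ 2)
  init : x t0 = Real.sqrt (r0 ^ 2 - t0 ^ 2)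
  initDeriv : t0 * x' t0 = x t0

open MeasureTheory

open Set

/-!
With `W = t x' - x` one has `W t0 = 0` and `W' = t x''`, and the ODE shows `x'' > 0` wherever
`W ≥ 0` (because `U' < 0` and `n > 2`). Hence `W` never becomes negative, `x` is convex and
increasing, and `x x'' ≥ (n - 2) (1 + x'²)`. The last inequality makes
`log (1 + x'²) - 2 (n - 2) log x` nondecreasing, which yields
`x' ≥ √(c (x / a) ^ (2 (n - 2)) - 1)` with `a = x t0` and `c = 1 + x'(t0)² = (r0 / t0)²`.
Comparing derivatives then gives `t - t0 ≤ ∫_a^{x t} dμ / √(c (μ / a) ^ (2 (n - 2)) - 1)`, and this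
integral stays bounded because the integrand decays like `μ ^ (2 - n)` with `n - 2 ≥ 2`.
-/

lemma Set.OrdConnected.monotoneOn_of_hasDerivAt_nonneg {D : Set ℝ} (hD : D.OrdConnected)
    {f f' : ℝ → ℝ} (hf : ∀ t ∈ D, HasDerivAt f (f' t) t) (hf' : ∀ t ∈ D, 0 ≤ f' t) :
    MonotoneOn f D :=
  monotoneOn_of_hasDerivWithinAt_nonneg hD.convex
    (fun t ht => (hf t ht).continuousAt.continuousWithinAt)
    (fun t ht => (hf t (interior_subset ht)).hasDerivWithinAt)
    (fun t ht => hf' t (interior_subset ht))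

lemma nonneg_of_hasDerivAt_pos_of_eq_zero {W W' : ℝ → ℝ} {a b : ℝ} (hab : a ≤ b)
    (hW : ∀ t ∈ Icc a b, HasDerivAt W (W' t) t) (ha : 0 ≤ W a)
    (hzero : ∀ t ∈ Ico a b, W t = 0 → 0 < W' t) : 0 ≤ W b :=
  image_le_of_deriv_right_lt_deriv_boundary' (f := 0) (f' := 0) continuousOn_const
    (fun _ _ => hasDerivWithinAt_const _ _ _) ha
    (fun t ht => (hW t ht).continuousAt.continuousWithinAt)
    (fun t ht => (hW t (Ico_subset_Icc_self ht)).hasDerivWithinAt)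
    (fun t ht h => hzero t ht h.symm) ⟨hab, le_rfl⟩

section BlowupIntegrand

/-- The integrand of the blow-up time `h0`. -/
noncomputable def blowupIntegrand (c a : ℝ) (k : ℕ) (μ : ℝ) : ℝ := 1 / √(c * (μ / a) ^ k - 1)

variable {c a : ℝ} {k : ℕ}

lemma blowupIntegrand_nonneg (μ : ℝ) : 0 ≤ blowupIntegrand c a k μ := by
  unfold blowupIntegrand
  positivity

lemma measurable_blowupIntegrand : Measurable (blowupIntegrand c a k) := by
  unfold blowupIntegrand
  fun_prop

lemma one_lt_mul_div_pow (hc : 1 < c) (ha : 0 < a) {μ : ℝ} (hμ : a ≤ μ) :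
    1 < c * (μ / a) ^ k := by
  have : 1 ≤ (μ / a) ^ k := one_le_pow₀ ((one_le_div ha).2 hμ)
  nlinarith

lemma continuousAt_blowupIntegrand (hc : 1 < c) (ha : 0 < a) {μ : ℝ} (hμ : a ≤ μ) :
    ContinuousAt (blowupIntegrand c a k) μ := by
  have hpos : 0 < c * (μ / a) ^ k - 1 := sub_pos.2 (one_lt_mul_div_pow hc ha hμ)
  unfold blowupIntegrand
  exact continuousAt_const.div (by fun_prop) (Real.sqrt_pos.2 hpos).ne'

lemma blowupIntegrand_le_rpow (hc : 1 < c) (ha : 0 < a) {μ : ℝ} (hμ : a ≤ μ) :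
    blowupIntegrand c a k μ ≤ a ^ (k / 2 : ℝ) / √(c - 1) * μ ^ (-(k / 2 : ℝ)) := by
  have hμ0 : 0 < μ := ha.trans_le hμ
  have hpow : 1 ≤ (μ / a) ^ k := one_le_pow₀ ((one_le_div ha).2 hμ)
  have hlow : (c - 1) * (μ / a) ^ k ≤ c * (μ / a) ^ k - 1 := by nlinarith
  have hsqrt : √((c - 1) * (μ / a) ^ k) = √(c - 1) * (μ ^ (k / 2 : ℝ) / a ^ (k / 2 : ℝ)) := by
    rw [Real.sqrt_mul (by linarith), Real.sqrt_eq_rpow ((μ / a) ^ k), ← Real.rpow_natCast,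
      ← Real.rpow_mul (by positivity), Real.div_rpow hμ0.le ha.le]
    ring_nf
  calc blowupIntegrand c a k μ ≤ 1 / √((c - 1) * (μ / a) ^ k) :=
        one_div_le_one_div_of_le (Real.sqrt_pos.2 (by positivity)) (Real.sqrt_le_sqrt hlow)
    _ = a ^ (k / 2 : ℝ) / √(c - 1) * μ ^ (-(k / 2 : ℝ)) := by
        rw [hsqrt, Real.rpow_neg hμ0.le]
        field_simp

lemma integrableOn_blowupIntegrand (hc : 1 < c) (ha : 0 < a) (hk : 2 < k) :
    IntegrableOn (blowupIntegrand c a k) (Ioi a) := by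
  have hexp : -((k : ℝ) / 2) < -1 := by
    have : (2 : ℝ) < k := by exact_mod_cast hk
    linarith
  refine ((integrableOn_Ioi_rpow_of_lt hexp ha).const_mul (a ^ (k / 2 : ℝ) / √(c - 1))).mono'
    measurable_blowupIntegrand.aestronglyMeasurable.restrict ?_
  refine (ae_restrict_iff' measurableSet_Ioi).2 (Filter.Eventually.of_forall fun μ hμ => ?_)
  rw [Real.norm_of_nonneg (blowupIntegrand_nonneg μ)]
  exact blowupIntegrand_le_rpow hc ha (le_of_lt hμ)

lemma hasDerivAt_integral_blowupIntegrand (hc : 1 < c) (ha : 0 < a) {y : ℝ} (hy : a ≤ y) :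
    HasDerivAt (fun y => ∫ μ in a..y, blowupIntegrand c a k μ) (blowupIntegrand c a k y) y := by
  have hint : IntervalIntegrable (blowupIntegrand c a k) volume a y := by
    refine ContinuousOn.intervalIntegrable fun μ hμ => ?_
    rw [uIcc_of_le hy] at hμ
    exact (continuousAt_blowupIntegrand hc ha hμ.1).continuousWithinAt
  exact intervalIntegral.integral_hasDerivAt_right hint
    measurable_blowupIntegrand.stronglyMeasurable.stronglyMeasurableAtFilter
    (continuousAt_blowupIntegrand hc ha hy)

lemma integral_blowupIntegrand_le (hint : IntegrableOn (blowupIntegrand c a k) (Ioi a))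
    {y : ℝ} (hy : a ≤ y) :
    ∫ μ in a..y, blowupIntegrand c a k μ ≤ ∫ μ in Ioi a, blowupIntegrand c a k μ := by
  rw [intervalIntegral.integral_of_le hy]
  exact setIntegral_mono_set hint (Filter.Eventually.of_forall blowupIntegrand_nonneg)
    Ioc_subset_Ioi_self.eventuallyLE

lemma one_le_blowupIntegrand_mul {y v : ℝ} (hy : 1 < c * (y / a) ^ k)
    (hv : c * (y / a) ^ k ≤ 1 + v ^ 2) (hv0 : 0 ≤ v) : 1 ≤ blowupIntegrand c a k y * v := by
  have hsqrt : √(c * (y / a) ^ k - 1) ≤ v := by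
    rw [Real.sqrt_le_left hv0]
    linarith
  rw [blowupIntegrand, one_div_mul_eq_div, one_le_div (Real.sqrt_pos.2 (by linarith))]
  exact hsqrt

end BlowupIntegrand

def profileDomain (t0 : ℝ) (tstar : EReal) : Set ℝ := {t | t0 ≤ t ∧ (t : EReal) < tstar}

lemma ordConnected_profileDomain (t0 : ℝ) (tstar : EReal) :
    (profileDomain t0 tstar).OrdConnected :=
  ⟨fun _ hp _ hq _ hs => ⟨hp.1.trans hs.1, (EReal.coe_le_coe_iff.2 hs.2).trans_lt hq.2⟩⟩

lemma Icc_subset_profileDomain {t0 t : ℝ} {tstar : EReal} (ht : t ∈ profileDomain t0 tstar) :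
    Icc t0 t ⊆ profileDomain t0 tstar :=
  fun _ hs => ⟨hs.1, (EReal.coe_le_coe_iff.2 hs.2).trans_lt ht.2⟩

lemma left_mem_profileDomain {t0 t : ℝ} {tstar : EReal} (ht : t ∈ profileDomain t0 tstar) :
    t0 ∈ profileDomain t0 tstar :=
  Icc_subset_profileDomain ht ⟨le_rfl, ht.1⟩

namespace IsGeneralProfile

variable {n : ℕ} {U' : ℝ → ℝ} {r0 t0 : ℝ} {tstar : EReal} {x x' x'' : ℝ → ℝ}

lemma deriv_init_eq (hx : IsGeneralProfile n U' r0 t0 tstar x x' x'') (ht0 : t0 ≠ 0) :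
    x' t0 = x t0 / t0 :=
  eq_div_of_mul_eq ht0 (by rw [mul_comm, hx.initDeriv])

lemma one_add_deriv_sq_init (hx : IsGeneralProfile n U' r0 t0 tstar x x' x'') (ht0 : t0 ≠ 0)
    (hr0 : t0 ^ 2 ≤ r0 ^ 2) : 1 + x' t0 ^ 2 = (r0 / t0) ^ 2 := by
  rw [hx.deriv_init_eq ht0, hx.init, div_pow, Real.sq_sqrt (sub_nonneg.2 hr0)]
  field_simp
  ring

lemma hasDerivAt_mul_deriv_sub (hx : IsGeneralProfile n U' r0 t0 tstar x x' x'') {t : ℝ}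
    (ht : t ∈ profileDomain t0 tstar) :
    HasDerivAt (fun s => s * x' s - x s) (t * x'' t) t := by
  refine (((hasDerivAt_id' t).mul (hx.hasDeriv2 t ht.1 ht.2)).sub
    (hx.hasDeriv t ht.1 ht.2)).congr_deriv ?_
  ring

lemma sub_two_mul_le_second_deriv_mul (hx : IsGeneralProfile n U' r0 t0 tstar x x' x'')
    (hUneg : ∀ s : ℝ, 0 < s → U' s < 0) (hn : 1 ≤ n) {t : ℝ} (ht : t ∈ profileDomain t0 tstar)
    (hW : 0 ≤ t * x' t - x t) : ((n : ℝ) - 2) * (1 + x' t ^ 2) ≤ x'' t * x t := by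
  have hxt := hx.pos t ht.1 ht.2
  have hU := hUneg (x t ^ 2 + t ^ 2) (by positivity)
  have hn1 : (0 : ℝ) ≤ n - 1 := by
    have : (1 : ℝ) ≤ n := by exact_mod_cast hn
    linarith
  have hterm : 0 ≤ -2 * ((n : ℝ) - 1) * U' (x t ^ 2 + t ^ 2) * (t * x' t - x t) * x t := by
    have : 0 ≤ -U' (x t ^ 2 + t ^ 2) := by linarith
    have := mul_nonneg (mul_nonneg (mul_nonneg hn1 this) hW) hxt.le
    linarith
  rw [hx.ode t ht.1 ht.2, mul_right_comm, add_mul, div_mul_cancel₀ _ hxt.ne']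
  nlinarith [sq_nonneg (x' t)]

lemma second_deriv_pos_of_nonneg (hx : IsGeneralProfile n U' r0 t0 tstar x x' x'')
    (hUneg : ∀ s : ℝ, 0 < s → U' s < 0) (hn : 3 ≤ n) {t : ℝ} (ht : t ∈ profileDomain t0 tstar)
    (hW : 0 ≤ t * x' t - x t) : 0 < x'' t := by
  have hxt := hx.pos t ht.1 ht.2
  have hn2 : (0 : ℝ) < n - 2 := by
    have : (3 : ℝ) ≤ n := by exact_mod_cast hn
    linarith
  have hprod : 0 < x'' t * x t :=
    (by positivity : 0 < ((n : ℝ) - 2) * (1 + x' t ^ 2)).trans_le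
      (hx.sub_two_mul_le_second_deriv_mul hUneg (by omega) ht hW)
  exact pos_of_mul_pos_left hprod hxt.le

lemma mul_deriv_sub_nonneg (hx : IsGeneralProfile n U' r0 t0 tstar x x' x'')
    (hUneg : ∀ s : ℝ, 0 < s → U' s < 0) (hn : 3 ≤ n) (ht0 : 0 < t0) {t : ℝ}
    (ht : t ∈ profileDomain t0 tstar) : 0 ≤ t * x' t - x t := by
  refine nonneg_of_hasDerivAt_pos_of_eq_zero (W := fun s => s * x' s - x s) ht.1
    (fun s hs => hx.hasDerivAt_mul_deriv_sub (Icc_subset_profileDomain ht hs))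
    (by simp only [hx.initDeriv, sub_self, le_refl]) fun s hs hWs => ?_
  have hs := Icc_subset_profileDomain ht (Ico_subset_Icc_self hs)
  exact mul_pos (ht0.trans_le hs.1) (hx.second_deriv_pos_of_nonneg hUneg hn hs hWs.ge)

lemma second_deriv_pos (hx : IsGeneralProfile n U' r0 t0 tstar x x' x'')
    (hUneg : ∀ s : ℝ, 0 < s → U' s < 0) (hn : 3 ≤ n) (ht0 : 0 < t0) {t : ℝ}
    (ht : t ∈ profileDomain t0 tstar) : 0 < x'' t :=
  hx.second_deriv_pos_of_nonneg hUneg hn ht (hx.mul_deriv_sub_nonneg hUneg hn ht0 ht)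

lemma deriv_pos (hx : IsGeneralProfile n U' r0 t0 tstar x x' x'')
    (hUneg : ∀ s : ℝ, 0 < s → U' s < 0) (hn : 3 ≤ n) (ht0 : 0 < t0) {t : ℝ}
    (ht : t ∈ profileDomain t0 tstar) : 0 < x' t := by
  have h0 := left_mem_profileDomain ht
  have hmono : MonotoneOn x' (profileDomain t0 tstar) :=
    (ordConnected_profileDomain t0 tstar).monotoneOn_of_hasDerivAt_nonneg
      (fun s hs => hx.hasDeriv2 s hs.1 hs.2) fun _ hs => (hx.second_deriv_pos hUneg hn ht0 hs).le
  calc 0 < x' t0 := by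
        rw [hx.deriv_init_eq ht0.ne']
        exact div_pos (hx.pos t0 h0.1 h0.2) ht0
    _ ≤ x' t := hmono h0 ht ht.1

lemma monotoneOn (hx : IsGeneralProfile n U' r0 t0 tstar x x' x'')
    (hUneg : ∀ s : ℝ, 0 < s → U' s < 0) (hn : 3 ≤ n) (ht0 : 0 < t0) :
    MonotoneOn x (profileDomain t0 tstar) :=
  (ordConnected_profileDomain t0 tstar).monotoneOn_of_hasDerivAt_nonneg
    (fun s hs => hx.hasDeriv s hs.1 hs.2) fun _ hs => (hx.deriv_pos hUneg hn ht0 hs).le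

lemma hasDerivAt_log_one_add_deriv_sq_sub (hx : IsGeneralProfile n U' r0 t0 tstar x x' x'')
    (m : ℝ) {t : ℝ} (ht : t ∈ profileDomain t0 tstar) :
    HasDerivAt (fun s => Real.log (1 + x' s ^ 2) - 2 * m * Real.log (x s))
      (2 * x' t * x'' t / (1 + x' t ^ 2) - 2 * m * (x' t / x t)) t := by
  have h1 : HasDerivAt (fun s => 1 + x' s ^ 2) (2 * x' t * x'' t) t :=
    (((hx.hasDeriv2 t ht.1 ht.2).pow 2).const_add 1).congr_deriv (by ring)
  exact (h1.log (by positivity)).sub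
    (((hx.hasDeriv t ht.1 ht.2).log (hx.pos t ht.1 ht.2).ne').const_mul (2 * m))

lemma one_add_deriv_sq_mul_le (hx : IsGeneralProfile n U' r0 t0 tstar x x' x'')
    (hUneg : ∀ s : ℝ, 0 < s → U' s < 0) (hn : 3 ≤ n) (ht0 : 0 < t0) {t : ℝ}
    (ht : t ∈ profileDomain t0 tstar) :
    (1 + x' t0 ^ 2) * (x t / x t0) ^ (2 * (n - 2)) ≤ 1 + x' t ^ 2 := by
  have h0 := left_mem_profileDomain ht
  set m : ℝ := ((n - 2 : ℕ) : ℝ) with hm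
  have hmono : MonotoneOn (fun s => Real.log (1 + x' s ^ 2) - 2 * m * Real.log (x s))
      (profileDomain t0 tstar) := by
    refine (ordConnected_profileDomain t0 tstar).monotoneOn_of_hasDerivAt_nonneg
      (fun s hs => hx.hasDerivAt_log_one_add_deriv_sq_sub m hs) fun s hs => ?_
    have hxs := hx.pos s hs.1 hs.2
    have hx's := hx.deriv_pos hUneg hn ht0 hs
    have key := hx.sub_two_mul_le_second_deriv_mul hUneg (by omega) hs
      (hx.mul_deriv_sub_nonneg hUneg hn ht0 hs)
    rw [hm, Nat.cast_sub (by omega : 2 ≤ n), Nat.cast_ofNat]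
    have : 2 * x' s * x'' s / (1 + x' s ^ 2) - 2 * ((n : ℝ) - 2) * (x' s / x s)
        = 2 * x' s * (x'' s * x s - ((n : ℝ) - 2) * (1 + x' s ^ 2)) / ((1 + x' s ^ 2) * x s) := by
      field_simp
    rw [this]
    exact div_nonneg (mul_nonneg (by positivity) (sub_nonneg.2 key)) (by positivity)
  have hx0 := hx.pos t0 h0.1 h0.2
  have hxt := hx.pos t ht.1 ht.2
  have hlog := hmono h0 ht ht.1
  rw [← Real.log_le_log_iff (by positivity) (by positivity), Real.log_mul (by positivity)
    (by positivity), Real.log_pow, Real.log_div hxt.ne' hx0.ne']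
  push_cast
  simp only at hlog
  linarith

lemma sub_le_integral_blowupIntegrand (hx : IsGeneralProfile n U' r0 t0 tstar x x' x'')
    (hUneg : ∀ s : ℝ, 0 < s → U' s < 0) (hn : 3 ≤ n) (ht0 : 0 < t0) {t : ℝ}
    (ht : t ∈ profileDomain t0 tstar) :
    t - t0 ≤ ∫ μ in x t0..x t, blowupIntegrand (1 + x' t0 ^ 2) (x t0) (2 * (n - 2)) μ := by
  have h0 := left_mem_profileDomain ht
  set c := 1 + x' t0 ^ 2
  set a := x t0 with ha_def
  have hc : 1 < c := lt_add_of_pos_right 1 (pow_pos (hx.deriv_pos hUneg hn ht0 h0) 2)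
  have ha : 0 < a := hx.pos t0 h0.1 h0.2
  have hxa : ∀ s ∈ profileDomain t0 tstar, a ≤ x s :=
    fun s hs => hx.monotoneOn hUneg hn ht0 h0 hs hs.1
  have hmono : MonotoneOn (fun s => (∫ μ in a..x s, blowupIntegrand c a (2 * (n - 2)) μ) - s)
      (profileDomain t0 tstar) :=
    (ordConnected_profileDomain t0 tstar).monotoneOn_of_hasDerivAt_nonneg
      (fun s hs => ((hasDerivAt_integral_blowupIntegrand hc ha (hxa s hs)).comp s
        (hx.hasDeriv s hs.1 hs.2)).sub (hasDerivAt_id' s))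
      fun s hs => sub_nonneg.2 (one_le_blowupIntegrand_mul (one_lt_mul_div_pow hc ha (hxa s hs))
        (hx.one_add_deriv_sq_mul_le hUneg hn ht0 hs) (hx.deriv_pos hUneg hn ht0 hs).le)
  have := hmono h0 ht ht.1
  simp only [← ha_def, intervalIntegral.integral_same] at this
  linarith

theorem le_add_integral_blowupIntegrand (hx : IsGeneralProfile n U' r0 t0 tstar x x' x'')
    (hUneg : ∀ s : ℝ, 0 < s → U' s < 0) (hn : 3 ≤ n) (ht0 : 0 < t0)
    (hint : IntegrableOn (blowupIntegrand (1 + x' t0 ^ 2) (x t0) (2 * (n - 2))) (Ioi (x t0))) :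
    tstar ≤ ((t0 + ∫ μ in Ioi (x t0), blowupIntegrand (1 + x' t0 ^ 2) (x t0) (2 * (n - 2)) μ : ℝ)
      : EReal) := by
  by_contra! hlt
  obtain ⟨T, hT0, hT⟩ := EReal.lt_iff_exists_real_btwn.1 hlt
  have hT0 := EReal.coe_lt_coe_iff.1 hT0
  have hI : 0 ≤ ∫ μ in Ioi (x t0), blowupIntegrand (1 + x' t0 ^ 2) (x t0) (2 * (n - 2)) μ :=
    setIntegral_nonneg measurableSet_Ioi fun μ _ => blowupIntegrand_nonneg μ
  have hTD : T ∈ profileDomain t0 tstar := ⟨by linarith, hT⟩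
  have hbound := hx.sub_le_integral_blowupIntegrand hUneg hn ht0 hTD
  have hle := integral_blowupIntegrand_le hint
    (hx.monotoneOn hUneg hn ht0 (left_mem_profileDomain hTD) hTD hTD.1)
  linarith

end IsGeneralProfile

theorem statement14_general (n : ℕ) (hn : 4 ≤ n) (r0 t0 : ℝ)
    (ht0 : 0 < t0) (htr : t0 < r0)
    (U' : ℝ → ℝ)
    (hUneg : ∀ s : ℝ, 0 < s → U' s < 0)
    (tstar : EReal)
    (x x' x'' : ℝ → ℝ) (hx : IsGeneralProfile n U' r0 t0 tstar x x' x'') :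
    IntegrableOn (fun μ : ℝ =>
        1 / Real.sqrt ((r0 / t0) ^ 2
          * (μ / Real.sqrt (r0 ^ 2 - t0 ^ 2)) ^ (2 * (n - 2)) - 1))
      (Set.Ioi (Real.sqrt (r0 ^ 2 - t0 ^ 2))) ∧
    tstar ≤ ((t0 + ∫ μ in Set.Ioi (Real.sqrt (r0 ^ 2 - t0 ^ 2)),
        1 / Real.sqrt ((r0 / t0) ^ 2
          * (μ / Real.sqrt (r0 ^ 2 - t0 ^ 2)) ^ (2 * (n - 2)) - 1) : ℝ)
      : EReal) := by
  have hsq : t0 ^ 2 < r0 ^ 2 := by nlinarith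
  have ha : 0 < x t0 := hx.init ▸ Real.sqrt_pos.2 (sub_pos.2 hsq)
  have hc : 1 < 1 + x' t0 ^ 2 := by
    rw [hx.deriv_init_eq ht0.ne']
    have : 0 < x t0 / t0 := div_pos ha ht0
    nlinarith
  have hint := integrableOn_blowupIntegrand hc ha (show 2 < 2 * (n - 2) by omega)
  rw [← hx.one_add_deriv_sq_init ht0.ne' hsq.le, ← hx.init]
  exact ⟨hint, hx.le_add_integral_blowupIntegrand hUneg (by omega) ht0 hint⟩

/-- for n ≥ 4, every general profile solution (U C¹ with U' < 0
on (0,∞)) blows up in finite time: t* ≤ h0 where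
h0 = t0 + ∫_{√(r0²−t0²)}^{+∞} dμ/√((r0/t0)²(μ/√(r0²−t0²))^{2(n−2)} − 1)
is finite (the integrand is integrable); hence the hypersurface of revolution
is bounded above by the hyperplane xₙ = h0. -/
theorem statement14 (n : ℕ) (hn : 4 ≤ n) (r0 t0 : ℝ) (hr0 : 0 < r0)
    (ht0 : 0 < t0) (htr : t0 < r0)
    (U U' : ℝ → ℝ)
    (hU : ∀ s : ℝ, 0 < s → HasDerivAt U (U' s) s)
    (hUc : ContinuousOn U' (Set.Ioi (0 : ℝ)))
    (hUneg : ∀ s : ℝ, 0 < s → U' s < 0)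
    (tstar : EReal) (hts : (t0 : EReal) < tstar)
    (x x' x'' : ℝ → ℝ) (hx : IsGeneralProfile n U' r0 t0 tstar x x' x'') :
    IntegrableOn (fun μ : ℝ =>
        1 / Real.sqrt ((r0 / t0) ^ 2
          * (μ / Real.sqrt (r0 ^ 2 - t0 ^ 2)) ^ (2 * (n - 2)) - 1))
      (Set.Ioi (Real.sqrt (r0 ^ 2 - t0 ^ 2))) ∧
    tstar ≤ ((t0 + ∫ μ in Set.Ioi (Real.sqrt (r0 ^ 2 - t0 ^ 2)),
        1 / Real.sqrt ((r0 / t0) ^ 2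
          * (μ / Real.sqrt (r0 ^ 2 - t0 ^ 2)) ^ (2 * (n - 2)) - 1) : ℝ)
      : EReal) :=
  statement14_general n hn r0 t0 ht0 htr U' hUneg tstar x x' x'' hx
end

section
/- Let 0 < R0 < R be real numbers, A : [R0, R] → ℝ continuous with A(r) ≤ 0 for all r ∈ [R0, R], and v : [R0, R] → ℝ twice continuously differentiable, satisfying v''(r) + A(r)·v(r) = 0 for all r ∈ [R0, R], together with v'(R0) = v(R0)/(2R0) and v(R) = 0. Then v is identically zero on [R0, R]. -/
/-!
The energy `W = v v'` satisfies `W' = v'² - A v² ≥ v'² ≥ 0`, so it is nondecreasing. The Robin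
condition gives `W(R0) = v(R0)² / (2 R0) ≥ 0` and the Dirichlet condition gives `W(R) = 0`, hence
`W ≡ 0`. Then `W' ≡ 0` forces `v' = 0` in the interior, so `v` is constant, equal to `v(R) = 0`.
-/

open Set Filter Topology

theorem MonotoneOn.eqOn_zero_of_nonneg_of_nonpos {f : ℝ → ℝ} {a b : ℝ}
    (hf : MonotoneOn f (Icc a b)) (ha : 0 ≤ f a) (hb : f b ≤ 0) : EqOn f 0 (Icc a b) :=
  fun _ hr =>
    have haI : a ∈ Icc a b := ⟨le_rfl, hr.1.trans hr.2⟩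
    have hbI : b ∈ Icc a b := ⟨hr.1.trans hr.2, le_rfl⟩
    le_antisymm ((hf hr hbI hr.2).trans hb) (ha.trans (hf haI hr hr.1))

theorem HasDerivAt.eq_zero_of_eqOn_zero {f : ℝ → ℝ} {f' x : ℝ} {s : Set ℝ}
    (hf : HasDerivAt f f' x) (hs : s ∈ 𝓝 x) (h0 : EqOn f 0 s) : f' = 0 :=
  hf.unique ((hasDerivAt_const x 0).congr_of_eventuallyEq (eventuallyEq_of_mem hs h0))

theorem eqOn_zero_of_hasDerivAt_zero {f : ℝ → ℝ} {a b : ℝ} (hf : ContinuousOn f (Icc a b))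
    (hf' : ∀ x ∈ Ioo a b, HasDerivAt f 0 x) (hb : f b = 0) : EqOn f 0 (Icc a b) := by
  intro r hr
  rcases hr.2.eq_or_lt with rfl | hrb
  · exact hb
  obtain ⟨c, _, hc⟩ := exists_hasDerivAt_eq_slope f (fun _ => 0) hrb
    (hf.mono (Icc_subset_Icc_left hr.1)) fun x hx => hf' x ⟨hr.1.trans_lt hx.1, hx.2⟩
  rw [hb, eq_div_iff (sub_ne_zero.2 hrb.ne')] at hc
  simpa using hc

theorem hasDerivAt_mul_deriv_of_ode {A v v' v'' : ℝ → ℝ} {x : ℝ}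
    (hv : HasDerivAt v (v' x) x) (hv' : HasDerivAt v' (v'' x) x)
    (hode : v'' x + A x * v x = 0) :
    HasDerivAt (fun r => v r * v' r) (v' x ^ 2 - A x * v x ^ 2) x :=
  (hv.mul hv').congr_deriv (by linear_combination v x * hode)

theorem statement17_general (R0 R : ℝ) (hR0 : 0 < R0)
    (A : ℝ → ℝ)
    (hAneg : ∀ r ∈ Set.Icc R0 R, A r ≤ 0)
    (v v' v'' : ℝ → ℝ)
    (hv1 : ∀ r ∈ Set.Icc R0 R, HasDerivAt v (v' r) r)
    (hv2 : ∀ r ∈ Set.Icc R0 R, HasDerivAt v' (v'' r) r)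
    (hode : ∀ r ∈ Set.Icc R0 R, v'' r + A r * v r = 0)
    (hRobin : v' R0 = v R0 / (2 * R0))
    (hDir : v R = 0) :
    ∀ r ∈ Set.Icc R0 R, v r = 0 := by
  set W : ℝ → ℝ := fun r => v r * v' r
  have hW : ∀ r ∈ Icc R0 R, HasDerivAt W (v' r ^ 2 - A r * v r ^ 2) r := fun r hr =>
    hasDerivAt_mul_deriv_of_ode (hv1 r hr) (hv2 r hr) (hode r hr)
  have hsq_le : ∀ r ∈ Icc R0 R, v' r ^ 2 ≤ v' r ^ 2 - A r * v r ^ 2 := fun r hr => by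
    nlinarith [hAneg r hr, sq_nonneg (v r)]
  have hmono : MonotoneOn W (Icc R0 R) :=
    monotoneOn_of_hasDerivWithinAt_nonneg (convex_Icc R0 R)
      (fun r hr => (hW r hr).continuousAt.continuousWithinAt)
      (fun r hr => (hW r (interior_subset hr)).hasDerivWithinAt)
      fun r hr => (sq_nonneg _).trans (hsq_le r (interior_subset hr))
  have hWR0 : 0 ≤ W R0 := by
    simp only [W, hRobin, ← mul_div_assoc]
    exact div_nonneg (mul_self_nonneg _) (by positivity)
  have hW0 : EqOn W 0 (Icc R0 R) := hmono.eqOn_zero_of_nonneg_of_nonpos hWR0 (by simp [W, hDir])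
  have hv' : ∀ r ∈ Ioo R0 R, HasDerivAt v 0 r := fun r hr => by
    have hrI := Ioo_subset_Icc_self hr
    have hW'0 := (hW r hrI).eq_zero_of_eqOn_zero (Icc_mem_nhds hr.1 hr.2) hW0
    have hv'r : v' r = 0 :=
      pow_eq_zero_iff two_ne_zero |>.1 <| le_antisymm (hW'0 ▸ hsq_le r hrI) (sq_nonneg _)
    exact hv'r ▸ hv1 r hrI
  exact eqOn_zero_of_hasDerivAt_zero (fun r hr => (hv1 r hr).continuousAt.continuousWithinAt)
    hv' hDir

/-- if A ≤ 0 on [R0,R] and v solves v'' + A·v = 0 with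
v'(R0) = v(R0)/(2R0) and v(R) = 0, then v vanishes identically on [R0,R]. -/
theorem statement17 (R0 R : ℝ) (hR0 : 0 < R0) (hRR : R0 < R)
    (A : ℝ → ℝ) (hA : ContinuousOn A (Set.Icc R0 R))
    (hAneg : ∀ r ∈ Set.Icc R0 R, A r ≤ 0)
    (v v' v'' : ℝ → ℝ)
    (hv1 : ∀ r ∈ Set.Icc R0 R, HasDerivAt v (v' r) r)
    (hv2 : ∀ r ∈ Set.Icc R0 R, HasDerivAt v' (v'' r) r)
    (hv2c : ContinuousOn v'' (Set.Icc R0 R))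
    (hode : ∀ r ∈ Set.Icc R0 R, v'' r + A r * v r = 0)
    (hRobin : v' R0 = v R0 / (2 * R0))
    (hDir : v R = 0) :
    ∀ r ∈ Set.Icc R0 R, v r = 0 :=
  statement17_general R0 R hR0 A hAneg v v' v'' hv1 hv2 hode hRobin hDir
end
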